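/- (Viscosity supersolution property of the semigroup trajectory.) Let S be a K-convex monotone semigroup on X with S(t)0 ≥ 0 for all t ≥ 0, where X and Y are topological vector spaces, the inclusion X → Y is sequentially continuous, the topology of Y is induced by a family of lattice seminorms, and K is strongly right-continuous (for every sequence t_n → 0 with t_n > 0 and every sequence u_n → u₀ in X, K(t_n)u_n → u₀ in Y). Let μ : Y → ℝ be a linear, sequentially continuous, positive functional (μ(y) ≥ 0 whenever y ≥ 0). Fix u₀ ∈ X and set u(s) := S(s)u₀ for s ≥ 0. Let t > 0 and let φ : (0,∞) → X be a function that is differentiable at t, i.e., there is φ'(t) ∈ X such that for every sequence h_n → 0 with h_n ≠ 0 and t + h_n > 0, (φ(t + h_n) − φ(t))/h_n → φ'(t) in X. Assume there exists Lφ(t) ∈ Y such that (S(h)φ(t) − φ(t))/h → Lφ(t) in Y as h ↓ 0 (along every sequence h_n ↓ 0). If μ(φ(t)) = μ(u(t)) and φ(s) ≤ u(s) for all s > 0, then μ(φ'(t)) ≥ μ(Lφ(t)). -/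

import Mathlib

/-
Compare `φ(t)` with the trajectory from the left. For `0 < h < 1`, set `w = φ(t - h)` and
`v = w + (φ(t) - w)/h`, so that `φ(t) = (1 - h) w + h v`. K-convexity gives
`S(h)φ(t) ≤ (1 - h) S(h)w + h K(h)v`, while `S(h)w ≤ S(h)S(t - h)u₀ = S(t)u₀` touches `φ(t)` under
`μ`, and `0 ≤ S(h)0 ≤ ½ S(h)w + ½ K(h)(-w)` bounds `-S(h)w` by `K(h)(-w)`. Altogether
`μ((S(h)φ(t) - φ(t))/h) ≤ μ(K(h)v) + μ(K(h)(-w))`, and as `h ↓ 0` the right-hand side tends to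
`μ(φ(t) + φ'(t)) + μ(-φ(t)) = μ(φ'(t))` by strong right-continuity of `K`.
-/

open Filter Topology

theorem monotone_of_map_nonneg {Y Z F : Type*} [AddCommGroup Y] [Preorder Y] [AddLeftMono Y]
    [AddCommGroup Z] [Preorder Z] [AddLeftMono Z] [FunLike F Y Z] [AddMonoidHomClass F Y Z]
    (μ : F) (hμ : ∀ y, 0 ≤ y → 0 ≤ μ y) : Monotone μ :=
  fun a b hab => sub_nonneg.1 <| map_sub μ b a ▸ hμ _ (sub_nonneg.2 hab)

theorem tendsto_of_tendsto_inv_smul_sub {α X : Type*} [AddCommGroup X] [Module ℝ X]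
    [TopologicalSpace X] [IsTopologicalAddGroup X] [ContinuousSMul ℝ X] {l : Filter α}
    {h : α → ℝ} (hne : ∀ n, h n ≠ 0) (h0 : Tendsto h l (𝓝 0)) {x d : X} {b : α → X}
    (hd : Tendsto (fun n => (h n)⁻¹ • (x - b n)) l (𝓝 d)) : Tendsto b l (𝓝 x) := by
  have := tendsto_const_nhds (x := x).sub (h0.smul hd)
  rw [zero_smul, sub_zero] at this
  refine this.congr fun n => ?_
  rw [smul_inv_smul₀ (hne n), sub_sub_cancel]

section KConvex

variable {X Y : Type*} [AddCommGroup X] [Module ℝ X] [AddCommGroup Y] [Module ℝ Y]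

def IsKConvex [LE Y] (ι : X →ₗ[ℝ] Y) (T : X → X) (J : X → Y) : Prop :=
  ∀ u v : X, ∀ l : ℝ, l ∈ Set.Icc (0 : ℝ) 1 →
    ι (T (l • u + (1 - l) • v)) ≤ l • ι (T u) + (1 - l) • J v

variable [Preorder X] [Preorder Y] {ι : X →ₗ[ℝ] Y} {μ : Y →ₗ[ℝ] ℝ} {T : X → X}
  {J : X → Y}

theorem neg_le_of_isKConvex (hι : Monotone ι) (hμ : Monotone μ) (hT : IsKConvex ι T J)
    (hT0 : 0 ≤ T 0) (w : X) : -μ (ι (T w)) ≤ μ (J (-w)) := by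
  have hconv := hT w (-w) (1 / 2) ⟨by norm_num, by norm_num⟩
  rw [show (1 / 2 : ℝ) • w + (1 - 1 / 2 : ℝ) • -w = 0 by module] at hconv
  have := hμ ((map_zero ι ▸ hι hT0).trans hconv)
  simp only [map_zero, map_add, map_smul, smul_eq_mul] at this
  linarith

theorem inv_smul_sub_le_of_isKConvex (hι : Monotone ι) (hμ : Monotone μ) (hT : IsKConvex ι T J)
    (hT0 : 0 ≤ T 0) {h : ℝ} (hh0 : 0 < h) (hh1 : h ≤ 1) {x w : X}
    (hw : μ (ι (T w)) ≤ μ (ι x)) :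
    μ (h⁻¹ • (ι (T x) - ι x)) ≤ μ (J (w + h⁻¹ • (x - w))) + μ (J (-w)) := by
  have hx : (1 - h) • w + (1 - (1 - h)) • (w + h⁻¹ • (x - w)) = x := by
    rw [sub_sub_cancel, smul_add, smul_inv_smul₀ hh0.ne']
    module
  have hconv := hT w (w + h⁻¹ • (x - w)) (1 - h) ⟨by linarith, by linarith⟩
  rw [hx] at hconv
  have hle := hμ hconv
  simp only [map_add, map_smul, smul_eq_mul] at hle
  have hneg := mul_le_mul_of_nonneg_left (neg_le_of_isKConvex hι hμ hT hT0 w) hh0.le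
  rw [map_smul, map_sub, smul_eq_mul, inv_mul_le_iff₀ hh0]
  linarith

end KConvex

theorem viscosity_supersolution_of_K_convex_general {X Y : Type*}
    [Lattice X] [AddCommGroup X] [Module ℝ X]
    [TopologicalSpace X] [IsTopologicalAddGroup X] [ContinuousSMul ℝ X]
    [Lattice Y] [AddCommGroup Y] [Module ℝ Y]
    [CovariantClass Y Y (· + ·) (· ≤ ·)]
    (ι : X →ₗ[ℝ] Y)
    (hι_order : ∀ u v : X, u ≤ v ↔ ι u ≤ ι v)
    (P : Set (Y → ℝ))
    (S : ℝ → X → X) (K : ℝ → X → Y)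
    (hSsem : ∀ s t : ℝ, 0 ≤ s → 0 ≤ t → ∀ u : X, S t (S s u) = S (t + s) u)
    (hSmono : ∀ t : ℝ, 0 ≤ t → ∀ u v : X, u ≤ v → S t u ≤ S t v)
    (hKconv : ∀ t : ℝ, 0 ≤ t → ∀ u v : X, ∀ l : ℝ, l ∈ Set.Icc (0 : ℝ) 1 →
      ι (S t (l • u + (1 - l) • v)) ≤ l • ι (S t u) + (1 - l) • K t v)
    (hSpos : ∀ t : ℝ, 0 ≤ t → 0 ≤ S t 0)
    (hKrc : ∀ t : ℕ → ℝ, (∀ n, 0 < t n) → Tendsto t atTop (𝓝 0) →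
      ∀ (u : ℕ → X) (u₀ : X), Tendsto u atTop (𝓝 u₀) →
      ∀ p ∈ P, Tendsto (fun n => p (K (t n) (u n) - ι u₀)) atTop (𝓝 0))
    (μ : Y →ₗ[ℝ] ℝ)
    (hμpos : ∀ y : Y, 0 ≤ y → 0 ≤ μ y)
    (hμcont : ∀ (y : ℕ → Y) (y₀ : Y),
      (∀ p ∈ P, Tendsto (fun n => p (y n - y₀)) atTop (𝓝 0)) →
      Tendsto (fun n => μ (y n)) atTop (𝓝 (μ y₀)))
    (u₀ : X) (t : ℝ) (ht : 0 < t)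
    (φ : ℝ → X) (φ' : X)
    (hφdiff : ∀ h : ℕ → ℝ, (∀ n, h n ≠ 0 ∧ 0 < t + h n) → Tendsto h atTop (𝓝 0) →
      Tendsto (fun n => (h n)⁻¹ • (φ (t + h n) - φ t)) atTop (𝓝 φ'))
    (Lφ : Y)
    (hLφ : ∀ h : ℕ → ℝ, (∀ n, 0 < h n) → Tendsto h atTop (𝓝 0) →
      ∀ p ∈ P, Tendsto
        (fun n => p ((h n)⁻¹ • (ι (S (h n) (φ t)) - ι (φ t)) - Lφ)) atTop (𝓝 0))
    (htouch : μ (ι (φ t)) = μ (ι (S t u₀)))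
    (hbelow : ∀ s : ℝ, 0 < s → φ s ≤ S s u₀) :
    μ Lφ ≤ μ (ι φ') := by
  have hι : Monotone ι := fun u v => (hι_order u v).1
  have hμ : Monotone μ := monotone_of_map_nonneg μ hμpos
  obtain ⟨h, -, hh, hh0⟩ := exists_seq_strictAnti_tendsto' (lt_min ht one_pos)
  have hpos n : 0 < h n := (hh n).1
  have hlt n : h n < t := (hh n).2.trans_le (min_le_left t 1)
  have hd : Tendsto (fun n => (h n)⁻¹ • (φ t - φ (t - h n))) atTop (𝓝 φ') := by
    refine (hφdiff (fun n => -h n) (fun n => ⟨neg_ne_zero.2 (hpos n).ne', by simp [hlt n]⟩)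
      (by simpa using hh0.neg)).congr fun n => ?_
    simp [← sub_eq_add_neg, ← smul_neg]
  have hw := tendsto_of_tendsto_inv_smul_sub (fun n => (hpos n).ne') hh0 hd
  have hK : Tendsto (fun n => μ (K (h n) (φ (t - h n) + (h n)⁻¹ • (φ t - φ (t - h n)))) +
      μ (K (h n) (-φ (t - h n)))) atTop (𝓝 (μ (ι φ'))) := by
    simpa using (hμcont _ _ (hKrc h hpos hh0 _ _ (hw.add hd))).add
      (hμcont _ _ (hKrc h hpos hh0 _ _ hw.neg))
  refine le_of_tendsto_of_tendsto' (hμcont _ _ (hLφ h hpos hh0)) hK fun n => ?_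
  have hSw_le : S (h n) (φ (t - h n)) ≤ S t u₀ := by
    have := hSmono _ (hpos n).le _ _ (hbelow _ (sub_pos.2 (hlt n)))
    rwa [hSsem _ _ (sub_pos.2 (hlt n)).le (hpos n).le, add_sub_cancel] at this
  exact inv_smul_sub_le_of_isKConvex hι hμ (hKconv _ (hpos n).le) (hSpos _ (hpos n).le)
    (hpos n) ((hh n).2.le.trans (min_le_right t 1)) (htouch ▸ hμ (hι hSw_le))

/-- (Viscosity supersolution property of the semigroup trajectory.)
`X ⊆ Y` are vector lattices (the inclusion is encoded via a linear lattice-order embedding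
`ι : X →ₗ[ℝ] Y`); `X` is a topological vector space; the topology of `Y` is induced by a
family `P` of lattice seminorms, so that sequential convergence in `Y` means convergence of
all the seminorms of `P` of the differences; the inclusion `X → Y` is sequentially continuous;
`S` is a `K`-convex monotone semigroup with `S(t)0 ≥ 0` and strongly right-continuous `K`;
`μ` is a linear, positive, sequentially continuous functional on `Y`. If `φ` is differentiable
at `t > 0` with derivative `φ'`, `φ(t)` lies in the domain of the generator of `S` at `t`
(with value `Lφ`), `μ(φ(t)) = μ(S(t)u₀)`, and `φ(s) ≤ S(s)u₀` for all `s > 0`, then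
`μ(Lφ) ≤ μ(φ')`. -/
theorem viscosity_supersolution_of_K_convex {X Y : Type*}
    [Lattice X] [AddCommGroup X] [Module ℝ X]
    [CovariantClass X X (· + ·) (· ≤ ·)] [PosSMulMono ℝ X]
    [TopologicalSpace X] [IsTopologicalAddGroup X] [ContinuousSMul ℝ X]
    [Lattice Y] [AddCommGroup Y] [Module ℝ Y]
    [CovariantClass Y Y (· + ·) (· ≤ ·)] [PosSMulMono ℝ Y]
    (ι : X →ₗ[ℝ] Y)
    (hι_order : ∀ u v : X, u ≤ v ↔ ι u ≤ ι v)
    (hι_sup : ∀ u v : X, ι (u ⊔ v) = ι u ⊔ ι v)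
    (P : Set (Y → ℝ))
    (hP_nonneg : ∀ p ∈ P, ∀ y : Y, 0 ≤ p y)
    (hP_add : ∀ p ∈ P, ∀ y z : Y, p (y + z) ≤ p y + p z)
    (hP_smul : ∀ p ∈ P, ∀ (r : ℝ) (y : Y), p (r • y) = |r| * p y)
    (hP_lattice : ∀ p ∈ P, ∀ y z : Y, y ⊔ (-y) ≤ z ⊔ (-z) → p y ≤ p z)
    (hι_seqcont : ∀ (u : ℕ → X) (u₀ : X), Tendsto u atTop (𝓝 u₀) →
      ∀ p ∈ P, Tendsto (fun n => p (ι (u n) - ι u₀)) atTop (𝓝 0))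
    (S : ℝ → X → X) (K : ℝ → X → Y)
    (hS0 : ∀ u : X, S 0 u = u)
    (hSsem : ∀ s t : ℝ, 0 ≤ s → 0 ≤ t → ∀ u : X, S t (S s u) = S (t + s) u)
    (hSmono : ∀ t : ℝ, 0 ≤ t → ∀ u v : X, u ≤ v → S t u ≤ S t v)
    (hKconv : ∀ t : ℝ, 0 ≤ t → ∀ u v : X, ∀ l : ℝ, l ∈ Set.Icc (0 : ℝ) 1 →
      ι (S t (l • u + (1 - l) • v)) ≤ l • ι (S t u) + (1 - l) • K t v)
    (hSpos : ∀ t : ℝ, 0 ≤ t → 0 ≤ S t 0)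
    (hKrc : ∀ t : ℕ → ℝ, (∀ n, 0 < t n) → Tendsto t atTop (𝓝 0) →
      ∀ (u : ℕ → X) (u₀ : X), Tendsto u atTop (𝓝 u₀) →
      ∀ p ∈ P, Tendsto (fun n => p (K (t n) (u n) - ι u₀)) atTop (𝓝 0))
    (μ : Y →ₗ[ℝ] ℝ)
    (hμpos : ∀ y : Y, 0 ≤ y → 0 ≤ μ y)
    (hμcont : ∀ (y : ℕ → Y) (y₀ : Y),
      (∀ p ∈ P, Tendsto (fun n => p (y n - y₀)) atTop (𝓝 0)) →
      Tendsto (fun n => μ (y n)) atTop (𝓝 (μ y₀)))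
    (u₀ : X) (t : ℝ) (ht : 0 < t)
    (φ : ℝ → X) (φ' : X)
    (hφdiff : ∀ h : ℕ → ℝ, (∀ n, h n ≠ 0 ∧ 0 < t + h n) → Tendsto h atTop (𝓝 0) →
      Tendsto (fun n => (h n)⁻¹ • (φ (t + h n) - φ t)) atTop (𝓝 φ'))
    (Lφ : Y)
    (hLφ : ∀ h : ℕ → ℝ, (∀ n, 0 < h n) → Tendsto h atTop (𝓝 0) →
      ∀ p ∈ P, Tendsto
        (fun n => p ((h n)⁻¹ • (ι (S (h n) (φ t)) - ι (φ t)) - Lφ)) atTop (𝓝 0))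
    (htouch : μ (ι (φ t)) = μ (ι (S t u₀)))
    (hbelow : ∀ s : ℝ, 0 < s → φ s ≤ S s u₀) :
    μ Lφ ≤ μ (ι φ') :=
  viscosity_supersolution_of_K_convex_general ι hι_order P S K hSsem hSmono hKconv hSpos hKrc μ
    hμpos hμcont u₀ t ht φ φ' hφdiff Lφ hLφ htouch hbelow
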